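/- Let ε > 0 and K* = max(K, ⌈1/ε⌉), and assume K* ≤ N. Define ŝ_i = 0 for all K* ≤ i ≤ N, and ŝ_i = ŝ_{i+1} + ((1[y_i = y_test] − 1[y_{i+1} = y_test])/K) · (min(K,i)/i) for 1 ≤ i ≤ K*−1. Then |ŝ_i − s_i| ≤ ε for every 1 ≤ i ≤ N, where s_i is the Shapley value of point i under the unweighted K-NN classification utility; moreover ŝ_i − ŝ_{i+1} = s_i − s_{i+1} for every 1 ≤ i ≤ K*−1. -/

import Mathlib

/-!
Under the Shapley weights `1 / (n * C(n - 1, |S|))`, the number of elements of a fixed set `B`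
in a random coalition `S ⊆ Q` is uniform on `{0, …, |B|}`:
`∑_{S ⊆ Q} g |S ∩ B| / C(|Q|, |S|) = (|Q| + 1) / (|B| + 1) * ∑_{m ≤ |B|} g m`,
by induction on `Q ∖ B` using `1 / C(n+1, k) + 1 / C(n+1, k+1) = (n+2) / (n+1) * 1 / C(n, k)`.
For the K-NN utility, both the marginal contribution of point `i` to `S` and the difference of the
contributions of `i` and `i + 1` only depend on whether fewer than `K` points of `S` precede `i`.
Hence `s i - s (i+1) = (1[y i = ytest] - 1[y (i+1) = ytest]) / K * min(K, i) / i`, which is the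
recursion defining `ŝ`, and `|s i| ≤ min(K, i) / (K i) ≤ 1 / i`. So `ŝ - s` is constant on
`[i, K*]`, where `ŝ` vanishes and `|s K*| ≤ 1 / K* ≤ ε`.
-/

open Finset

/-- The Shapley value of player `i` in the cooperative game with player set `P`
and utility function `ν`. -/
noncomputable def shapley (P : Finset ℕ) (ν : Finset ℕ → ℝ) (i : ℕ) : ℝ :=
  (1 / (P.card : ℝ)) * ∑ S ∈ (P.erase i).powerset,
    (1 / ((P.card - 1).choose S.card : ℝ)) * (ν (insert i S) - ν S)

/-- The unweighted K-NN classification utility: training points are sorted by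
increasing distance to the test point, so the k-th nearest neighbor within `S`
is the k-th smallest element of `S` (given by the sorted list of `S`). -/
noncomputable def knnUtil (K : ℕ) (y : ℕ → ℕ) (ytest : ℕ) (S : Finset ℕ) : ℝ :=
  (1 / (K : ℝ)) * ∑ k ∈ Finset.range (min K S.card),
    if y ((S.sort (· ≤ ·)).getD k 0) = ytest then (1 : ℝ) else 0

theorem one_div_choose_succ_add_one_div_choose_succ_succ {n k : ℕ} (hk : k ≤ n) :
    1 / ((n + 1).choose k : ℝ) + 1 / ((n + 1).choose (k + 1) : ℝ) =
      (n + 2) / (n + 1) * (1 / (n.choose k : ℝ)) := by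
  have hc : (0 : ℝ) < n.choose k := by exact_mod_cast Nat.choose_pos hk
  have h₁ : 1 / ((n + 1).choose k : ℝ) = (n + 1 - k) / ((n + 1) * n.choose k) := by
    have h := congrArg (Nat.cast (R := ℝ)) (Nat.choose_mul_succ_eq n k)
    push_cast [Nat.cast_sub (by omega : k ≤ n + 1)] at h
    have : (0 : ℝ) < (n + 1).choose k := by exact_mod_cast Nat.choose_pos (by omega)
    field_simp
    linarith
  have h₂ : 1 / ((n + 1).choose (k + 1) : ℝ) = (k + 1) / ((n + 1) * n.choose k) := by
    have h : ((n : ℝ) + 1) * n.choose k = (n + 1).choose (k + 1) * (k + 1) := by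
      exact_mod_cast Nat.add_one_mul_choose_eq n k
    have : (0 : ℝ) < (n + 1).choose (k + 1) := by exact_mod_cast Nat.choose_pos (by omega)
    field_simp
    linarith
  rw [h₁, h₂, ← add_div]
  field_simp
  ring

section PowersetSum

variable {α : Type*} [DecidableEq α]

theorem sum_powerset_union_one_div_choose_mul {p : α → Prop} [DecidablePred p] {B : Finset α}
    (hB : ∀ x ∈ B, p x) (g : ℕ → ℝ)
    {A : Finset α} (hA : ∀ x ∈ A, ¬ p x) :
    ∑ S ∈ (B ∪ A).powerset, 1 / ((#(B ∪ A)).choose #S : ℝ) * g #(S.filter p) =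
      (#(B ∪ A) + 1) / (#B + 1) * ∑ m ∈ range (#B + 1), g m := by
  induction A using Finset.induction_on with
  | empty =>
    have hfilter : ∀ S ∈ B.powerset, S.filter p = S := fun S hS =>
      filter_true_of_mem fun x hx => hB x (mem_powerset.1 hS hx)
    rw [union_empty, sum_congr rfl fun S hS => by rw [hfilter S hS],
      sum_powerset_apply_card (fun m => 1 / ((#B).choose m : ℝ) * g m), div_self (by positivity),
      one_mul]
    refine sum_congr rfl fun m hm => ?_
    have : ((#B).choose m : ℝ) ≠ 0 := by
      exact_mod_cast (Nat.choose_pos (Nat.lt_succ_iff.1 (mem_range.1 hm))).ne'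
    rw [nsmul_eq_mul]
    field_simp
  | insert a A ha ih =>
    have haBA : a ∉ B ∪ A := by
      simp only [mem_union, not_or]
      exact ⟨fun h => hA a (mem_insert_self a A) (hB a h), ha⟩
    have hS : ∀ S ∈ (B ∪ A).powerset,
        1 / ((#(B ∪ A) + 1).choose #S : ℝ) * g #(S.filter p) +
          1 / ((#(B ∪ A) + 1).choose #(insert a S) : ℝ) * g #((insert a S).filter p) =
        (#(B ∪ A) + 2) / (#(B ∪ A) + 1) *
          (1 / ((#(B ∪ A)).choose #S : ℝ) * g #(S.filter p)) := by
      intro S hS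
      have hSsub := mem_powerset.1 hS
      rw [card_insert_of_notMem (fun h => haBA (hSsub h)),
        filter_insert, if_neg (hA a (mem_insert_self a A)), ← add_mul,
        one_div_choose_succ_add_one_div_choose_succ_succ (card_le_card hSsub)]
      have : ((#(B ∪ A)).choose #S : ℝ) ≠ 0 := by
        exact_mod_cast (Nat.choose_pos (card_le_card hSsub)).ne'
      field_simp
    rw [union_insert, sum_powerset_insert haBA, card_insert_of_notMem haBA, ← sum_add_distrib,
      sum_congr rfl hS, ← mul_sum, ih fun x hx => hA x (mem_insert_of_mem hx)]
    push_cast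
    field_simp
    ring

theorem sum_powerset_one_div_choose_mul_card_filter (Q : Finset α) (p : α → Prop)
    [DecidablePred p] (g : ℕ → ℝ) :
    ∑ S ∈ Q.powerset, 1 / ((#Q).choose #S : ℝ) * g #(S.filter p) =
      (#Q + 1) / (#(Q.filter p) + 1) * ∑ m ∈ range (#(Q.filter p) + 1), g m := by
  have h := sum_powerset_union_one_div_choose_mul (B := Q.filter p) (A := Q.filter (¬ p ·))
    (fun _ hx => (mem_filter.1 hx).2) g (fun _ hx => (mem_filter.1 hx).2)
  rwa [filter_union_filter_not_eq] at h

end PowersetSum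

theorem abs_shapley_le_of_abs_marginal_le {P : Finset ℕ} {i : ℕ} (hi : i ∈ P)
    {ν : Finset ℕ → ℝ} (p : ℕ → Prop) [DecidablePred p] (g : ℕ → ℝ)
    (hν : ∀ S ⊆ P.erase i, |ν (insert i S) - ν S| ≤ g #(S.filter p)) :
    |shapley P ν i| ≤
      1 / (#((P.erase i).filter p) + 1) * ∑ m ∈ range (#((P.erase i).filter p) + 1), g m := by
  have hP : (#P : ℝ) = #(P.erase i) + 1 := by
    rw [card_erase_of_mem hi, Nat.cast_sub (card_pos.2 ⟨i, hi⟩)]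
    ring
  unfold shapley
  rw [abs_mul, abs_of_nonneg (by positivity), ← card_erase_of_mem hi]
  calc 1 / (#P : ℝ) * |∑ S ∈ (P.erase i).powerset,
          1 / ((#(P.erase i)).choose #S : ℝ) * (ν (insert i S) - ν S)|
      ≤ 1 / (#P : ℝ) * ∑ S ∈ (P.erase i).powerset,
          1 / ((#(P.erase i)).choose #S : ℝ) * g #(S.filter p) := by
        gcongr
        refine (abs_sum_le_sum_abs _ _).trans (sum_le_sum fun S hS => ?_)
        rw [abs_mul, abs_of_nonneg (by positivity)]
        gcongr
        exact hν S (mem_powerset.1 hS)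
    _ = _ := by
        rw [sum_powerset_one_div_choose_mul_card_filter, hP]
        field_simp

theorem shapley_sub_shapley {P : Finset ℕ} {i j : ℕ} (hi : i ∈ P) (hj : j ∈ P) (hij : i ≠ j)
    (ν : Finset ℕ → ℝ) :
    shapley P ν i - shapley P ν j =
      1 / (#((P.erase i).erase j) + 1) * ∑ S ∈ ((P.erase i).erase j).powerset,
        1 / ((#((P.erase i).erase j)).choose #S : ℝ) * (ν (insert i S) - ν (insert j S)) := by
  generalize hQ : (P.erase i).erase j = Q
  have hjQ : j ∉ Q := hQ ▸ notMem_erase j _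
  have hiQ : i ∉ Q := hQ ▸ fun h => notMem_erase i P (mem_of_mem_erase h)
  have hPi : P.erase i = insert j Q := hQ ▸ (insert_erase (mem_erase.2 ⟨hij.symm, hj⟩)).symm
  have hPj : P.erase j = insert i Q := by
    rw [← hQ, erase_right_comm]
    exact (insert_erase (mem_erase.2 ⟨hij, hi⟩)).symm
  have hP : #P = #Q + 2 := by
    rw [← card_erase_add_one hi, hPi, card_insert_of_notMem hjQ]
  have hS : ∀ S ∈ Q.powerset,
      (1 / ((#Q + 1).choose #S : ℝ) * (ν (insert i S) - ν S) +
          1 / ((#Q + 1).choose #(insert j S) : ℝ) * (ν (insert i (insert j S)) - ν (insert j S))) -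
        (1 / ((#Q + 1).choose #S : ℝ) * (ν (insert j S) - ν S) +
          1 / ((#Q + 1).choose #(insert i S) : ℝ) * (ν (insert j (insert i S)) - ν (insert i S))) =
      (#Q + 2) / (#Q + 1) * (1 / ((#Q).choose #S : ℝ) * (ν (insert i S) - ν (insert j S))) := by
    intro S hS
    have hSQ := mem_powerset.1 hS
    rw [card_insert_of_notMem fun h => hjQ (hSQ h), card_insert_of_notMem fun h => hiQ (hSQ h),
      insert_comm j i S]
    have key := one_div_choose_succ_add_one_div_choose_succ_succ (card_le_card hSQ)
    linear_combination (ν (insert i S) - ν (insert j S)) * key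
  unfold shapley
  rw [hPi, hPj, hP, sum_powerset_insert hjQ, sum_powerset_insert hiQ,
    show #Q + 2 - 1 = #Q + 1 by omega, ← sum_add_distrib, ← sum_add_distrib, ← mul_sub,
    ← sum_sub_distrib, sum_congr rfl hS, ← mul_sum, ← mul_assoc, Nat.cast_add, Nat.cast_two]
  have h2 : (#Q : ℝ) + 2 ≠ 0 := by norm_cast
  rw [one_div_mul_eq_div, div_div_cancel_left' h2, one_div]

theorem sum_range_ite_lt {M : Type*} [AddCommMonoid M] (n K : ℕ) (c : M) :
    ∑ m ∈ range n, (if m < K then c else 0) = min n K • c := by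
  rw [← sum_filter, show (range n).filter (· < K) = range (min n K) by ext; simp,
    sum_const, card_range]

namespace List

variable {α M : Type*} [AddCommMonoid M]

theorem sum_range_min_length_getD (f : α → M) (l : List α) (n : ℕ) (d : α) :
    ∑ k ∈ Finset.range (min n l.length), f (l.getD k d) = ((l.take n).map f).sum := by
  induction l generalizing n with
  | nil => simp
  | cons a l ih =>
    cases n with
    | zero => simp
    | succ n =>
      rw [length_cons, Nat.add_min_add_right, Finset.sum_range_succ', take_succ_cons, map_cons,
        sum_cons, ← ih, getD_cons_zero, add_comm]
      simp only [getD_cons_succ]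

theorem sum_map_take_append_cons (f : α → M) {l₁ : List α} (a : α) (l₂ : List α) {n : ℕ}
    (h : l₁.length < n) :
    (((l₁ ++ a :: l₂).take n).map f).sum = f a + (((l₁ ++ l₂).take (n - 1)).map f).sum := by
  rw [take_append, take_append, take_of_length_le (l := l₁) h.le,
    take_of_length_le (l := l₁) (by omega), take_cons (by omega),
    show n - l₁.length - 1 = n - 1 - l₁.length by omega]
  simp only [map_append, map_cons, sum_append, sum_cons]
  abel

theorem take_append_cons_of_le {l₁ : List α} (a : α) (l₂ : List α) {n : ℕ} (h : n ≤ l₁.length) :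
    (l₁ ++ a :: l₂).take n = (l₁ ++ l₂).take n := by
  rw [take_append_of_le_length h, take_append_of_le_length h]

theorem filter_lt_append_filter_not_lt [LinearOrder α] {l : List α} (hl : l.Pairwise (· ≤ ·))
    (a : α) : l.filter (· < a) ++ l.filter (fun x => ¬ x < a) = l := by
  simp only [decide_not]
  refine (filter_append_perm _ l).eq_of_pairwise' ?_ hl
  rw [pairwise_append]
  refine ⟨hl.filter _, hl.filter _, fun x hx z hz => ?_⟩
  simp only [mem_filter, decide_eq_true_eq, Bool.not_eq_eq_eq_not, Bool.not_true,
    decide_eq_false_iff_not, not_lt] at hx hz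
  exact hx.2.le.trans hz.2

end List

namespace Finset

variable {α : Type*} [LinearOrder α]

theorem length_filter_sort (S : Finset α) (p : α → Prop) [DecidablePred p] :
    ((S.sort (· ≤ ·)).filter p).length = #(S.filter p) := by
  rw [← List.toFinset_card_of_nodup ((sort_nodup S _).filter _)]
  congr 1
  ext x
  simp

theorem sort_insert_eq_filter_append_cons (S : Finset α) {a : α} (ha : a ∉ S) :
    (insert a S).sort (· ≤ ·) =
      (S.sort (· ≤ ·)).filter (· < a) ++ a :: (S.sort (· ≤ ·)).filter (fun x => ¬ x < a) := by
  set L := S.sort (· ≤ ·)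
  have hL : L.Pairwise (· < ·) := (sortedLT_sort S).pairwise
  have hl : (L.filter (· < a) ++ a :: L.filter (fun x => ¬ x < a)).Pairwise (· < ·) := by
    rw [List.pairwise_append, List.pairwise_cons]
    refine ⟨hL.filter _, ⟨fun z hz => ?_, hL.filter _⟩, fun x hx z hz => ?_⟩
    · simp only [List.mem_filter, mem_sort, L, decide_eq_true_eq, not_lt] at hz
      exact hz.2.lt_of_ne fun h => ha (h ▸ hz.1)
    · simp only [List.mem_filter, decide_eq_true_eq, List.mem_cons, not_lt] at hx hz
      rcases hz with rfl | hz
      · exact hx.2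
      · exact hx.2.trans_le hz.2
  have hmem : (L.filter (· < a) ++ a :: L.filter (fun x => ¬ x < a)).toFinset = insert a S := by
    ext x
    simp only [List.mem_toFinset, List.mem_append, List.mem_cons, List.mem_filter, mem_sort, L,
      decide_eq_true_eq, mem_insert]
    tauto
  rw [← hmem, (List.toFinset_sort _ hl.nodup).2 (hl.imp le_of_lt)]

end Finset

section knn

variable (K : ℕ) (y : ℕ → ℕ) (ytest : ℕ)

theorem knnUtil_eq_sum_take (S : Finset ℕ) :
    knnUtil K y ytest S =
      1 / K * (((S.sort (· ≤ ·)).take K).map fun j => if y j = ytest then (1 : ℝ) else 0).sum := by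
  rw [knnUtil, ← List.sum_range_min_length_getD, length_sort]

variable {K y ytest}

theorem knnUtil_insert_sub_knnUtil_insert {S : Finset ℕ} {i j : ℕ} (hi : i ∉ S) (hj : j ∉ S)
    (hij : ∀ x ∈ S, x < i ↔ x < j) :
    knnUtil K y ytest (insert i S) - knnUtil K y ytest (insert j S) =
      if #(S.filter (· < i)) < K then
        ((if y i = ytest then (1 : ℝ) else 0) - (if y j = ytest then (1 : ℝ) else 0)) / K
      else 0 := by
  have hfilter : (S.sort (· ≤ ·)).filter (· < j) = (S.sort (· ≤ ·)).filter (· < i) :=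
    List.filter_congr fun x hx => decide_eq_decide.2 (hij x ((mem_sort _).1 hx)).symm
  have hfilter' : (S.sort (· ≤ ·)).filter (fun x => ¬ x < j) =
      (S.sort (· ≤ ·)).filter (fun x => ¬ x < i) :=
    List.filter_congr fun x hx => decide_eq_decide.2 (not_congr (hij x ((mem_sort _).1 hx)).symm)
  rw [knnUtil_eq_sum_take, knnUtil_eq_sum_take, sort_insert_eq_filter_append_cons S hi,
    sort_insert_eq_filter_append_cons S hj, hfilter, hfilter', ← length_filter_sort]
  by_cases h : ((S.sort (· ≤ ·)).filter (· < i)).length < K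
  · rw [if_pos h, List.sum_map_take_append_cons _ _ _ h, List.sum_map_take_append_cons _ _ _ h]
    ring
  · rw [if_neg h, List.take_append_cons_of_le _ _ (not_lt.1 h),
      List.take_append_cons_of_le _ _ (not_lt.1 h), sub_self]

theorem abs_knnUtil_insert_sub_knnUtil_le {S : Finset ℕ} {i : ℕ} (hi : i ∉ S) :
    |knnUtil K y ytest (insert i S) - knnUtil K y ytest S| ≤
      if #(S.filter (· < i)) < K then 1 / (K : ℝ) else 0 := by
  set χ : ℕ → ℝ := fun j => if y j = ytest then 1 else 0
  have hχ : ∀ j, 0 ≤ χ j ∧ χ j ≤ 1 := fun j => by by_cases h : y j = ytest <;> simp [χ, h]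
  have hsplit := List.filter_lt_append_filter_not_lt (pairwise_sort S (· ≤ ·)) i
  rw [knnUtil_eq_sum_take, knnUtil_eq_sum_take, sort_insert_eq_filter_append_cons S hi,
    ← length_filter_sort]
  split_ifs with h
  · obtain ⟨k, rfl⟩ : ∃ k, K = k + 1 := ⟨K - 1, by omega⟩
    rw [List.sum_map_take_append_cons _ _ _ h, hsplit, Nat.add_sub_cancel, List.take_add_one,
      List.map_append, List.sum_append]
    have hlast : 0 ≤ ((S.sort (· ≤ ·))[k]?.toList.map χ).sum ∧
        ((S.sort (· ≤ ·))[k]?.toList.map χ).sum ≤ 1 := by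
      cases (S.sort (· ≤ ·))[k]? <;> simp [hχ]
    rw [← mul_sub, abs_mul, abs_of_nonneg (by positivity)]
    refine mul_le_of_le_one_right (by positivity) (abs_le.2 ⟨?_, ?_⟩) <;>
      linarith [hχ i, hlast]
  · rw [List.take_append_cons_of_le _ _ (not_lt.1 h), hsplit, sub_self, abs_zero]

end knn

section knnShapley

variable {N K : ℕ} {y : ℕ → ℕ} {ytest : ℕ} {i : ℕ}

theorem knn_shapley_sub_shapley_succ (hi : 1 ≤ i) (hiN : i + 1 ≤ N) :
    shapley (Icc 1 N) (knnUtil K y ytest) i - shapley (Icc 1 N) (knnUtil K y ytest) (i + 1) =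
      ((if y i = ytest then (1 : ℝ) else 0) - (if y (i + 1) = ytest then (1 : ℝ) else 0)) / K *
        (min (K : ℝ) i / i) := by
  set d := (if y i = ytest then (1 : ℝ) else 0) - (if y (i + 1) = ytest then (1 : ℝ) else 0)
  rw [shapley_sub_shapley (mem_Icc.2 ⟨hi, by omega⟩) (mem_Icc.2 ⟨by omega, hiN⟩) (by omega)]
  have hpred : #((((Icc 1 N).erase i).erase (i + 1)).filter (· < i)) = i - 1 := by
    rw [show (((Icc 1 N).erase i).erase (i + 1)).filter (· < i) = Ico 1 i by ext; simp; omega,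
      Nat.card_Ico]
  have hmarg : ∀ S ∈ (((Icc 1 N).erase i).erase (i + 1)).powerset,
      knnUtil K y ytest (insert i S) - knnUtil K y ytest (insert (i + 1) S) =
        if #(S.filter (· < i)) < K then d / K else 0 := by
    intro S hS
    have hSsub := mem_powerset.1 hS
    have hiS : i ∉ S := fun h => by simpa using hSsub h
    have hi1S : i + 1 ∉ S := fun h => by simpa using hSsub h
    refine knnUtil_insert_sub_knnUtil_insert hiS hi1S fun x hx => ?_
    have : x ≠ i := fun h => hiS (h ▸ hx)
    omega
  rw [sum_congr rfl fun S hS => by rw [hmarg S hS],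
    sum_powerset_one_div_choose_mul_card_filter _ (· < i) fun m => if m < K then d / K else 0,
    hpred, Nat.cast_pred hi, sub_add_cancel, Nat.sub_add_cancel hi, sum_range_ite_lt,
    nsmul_eq_mul, Nat.cast_min, min_comm]
  have : (i : ℝ) ≠ 0 := by positivity
  field_simp

theorem abs_knn_shapley_le (hi : 1 ≤ i) (hiN : i ≤ N) :
    |shapley (Icc 1 N) (knnUtil K y ytest) i| ≤ 1 / i := by
  have hpred : #(((Icc 1 N).erase i).filter (· < i)) = i - 1 := by
    rw [show ((Icc 1 N).erase i).filter (· < i) = Ico 1 i by ext; simp; omega, Nat.card_Ico]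
  refine (abs_shapley_le_of_abs_marginal_le (mem_Icc.2 ⟨hi, hiN⟩) (· < i)
    (fun m => if m < K then 1 / (K : ℝ) else 0)
    fun S hS => abs_knnUtil_insert_sub_knnUtil_le fun h => by simpa using hS h).trans ?_
  rw [hpred, Nat.cast_pred hi, sub_add_cancel, Nat.sub_add_cancel hi, sum_range_ite_lt,
    nsmul_eq_mul, Nat.cast_min, mul_one_div]
  exact mul_le_of_le_one_right (by positivity) (div_le_one_of_le₀ (min_le_right _ _) K.cast_nonneg)

end knnShapley

theorem knn_shapley_truncated_approx_general (N K : ℕ)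
    (y : ℕ → ℕ) (ytest : ℕ) (ε : ℝ) (hε : 0 < ε)
    (Kstar : ℕ) (hKstar : Kstar = max K ⌈1 / ε⌉₊) (hKsN : Kstar ≤ N)
    (shat : ℕ → ℝ)
    (hzero : ∀ i, Kstar ≤ i → i ≤ N → shat i = 0)
    (hrec : ∀ i, 1 ≤ i → i ≤ Kstar - 1 →
      shat i = shat (i + 1) +
        ((if y i = ytest then (1 : ℝ) else 0) -
            (if y (i + 1) = ytest then (1 : ℝ) else 0)) / K *
          (min (K : ℝ) (i : ℝ) / i)) :
    (∀ i, 1 ≤ i → i ≤ N →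
      |shat i - shapley (Finset.Icc 1 N) (knnUtil K y ytest) i| ≤ ε) ∧
    (∀ i, 1 ≤ i → i ≤ Kstar - 1 →
      shat i - shat (i + 1) =
        shapley (Finset.Icc 1 N) (knnUtil K y ytest) i -
          shapley (Finset.Icc 1 N) (knnUtil K y ytest) (i + 1)) := by
  set s := shapley (Icc 1 N) (knnUtil K y ytest)
  have hKstar_pos : 0 < Kstar := hKstar ▸ lt_max_of_lt_right (Nat.ceil_pos.2 (one_div_pos.2 hε))
  have hinv : 1 / (Kstar : ℝ) ≤ ε := (one_div_le (by positivity) hε).2 <|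
    (Nat.le_ceil _).trans (mod_cast hKstar ▸ le_max_right _ _)
  have hdiff : ∀ i, 1 ≤ i → i ≤ Kstar - 1 → shat i - shat (i + 1) = s i - s (i + 1) := by
    intro i hi hiK
    rw [hrec i hi hiK, knn_shapley_sub_shapley_succ hi (by omega)]
    ring
  have htail : ∀ i, Kstar ≤ i → i ≤ N → |s i| ≤ ε := fun i hKi hiN =>
    (abs_knn_shapley_le (by omega) hiN).trans
      ((one_div_le_one_div_of_le (by positivity) (mod_cast hKi)).trans hinv)
  refine ⟨fun i hi hiN => ?_, hdiff⟩
  rcases le_or_gt Kstar i with hKi | hiK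
  · rw [hzero i hKi hiN, zero_sub, abs_neg]
    exact htail i hKi hiN
  · have hconst : ∀ j, i ≤ j → j ≤ Kstar → shat i - s i = shat j - s j := by
      intro j hij
      induction j, hij using Nat.le_induction with
      | base => exact fun _ => rfl
      | succ j hij ih =>
        intro hj
        rw [ih (by omega)]
        linarith [hdiff j (by omega) (by omega)]
    rw [hconst Kstar hiK.le le_rfl, hzero Kstar le_rfl hKsN, zero_sub, abs_neg]
    exact htail Kstar le_rfl hKsN

/-- Truncating the Shapley recursion at `K* = max(K, ⌈1/ε⌉)` yields an
`(ε,0)`-approximation of the K-NN Shapley values, and the approximation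
preserves all Shapley-value differences below `K*`. -/
theorem knn_shapley_truncated_approx (N K : ℕ) (hK1 : 1 ≤ K) (hKN : K ≤ N)
    (y : ℕ → ℕ) (ytest : ℕ) (ε : ℝ) (hε : 0 < ε)
    (Kstar : ℕ) (hKstar : Kstar = max K ⌈1 / ε⌉₊) (hKsN : Kstar ≤ N)
    (shat : ℕ → ℝ)
    (hzero : ∀ i, Kstar ≤ i → i ≤ N → shat i = 0)
    (hrec : ∀ i, 1 ≤ i → i ≤ Kstar - 1 →
      shat i = shat (i + 1) +
        ((if y i = ytest then (1 : ℝ) else 0) -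
            (if y (i + 1) = ytest then (1 : ℝ) else 0)) / K *
          (min (K : ℝ) (i : ℝ) / i)) :
    (∀ i, 1 ≤ i → i ≤ N →
      |shat i - shapley (Finset.Icc 1 N) (knnUtil K y ytest) i| ≤ ε) ∧
    (∀ i, 1 ≤ i → i ≤ Kstar - 1 →
      shat i - shat (i + 1) =
        shapley (Finset.Icc 1 N) (knnUtil K y ytest) i -
          shapley (Finset.Icc 1 N) (knnUtil K y ytest) (i + 1)) :=
  knn_shapley_truncated_approx_general N K y ytest ε hε Kstar hKstar hKsN shat hzero hrec
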